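/- Let $S = K[x_1,\ldots,x_n]$ and let $I \subset S$ be an $\mathfrak{m}$-primary stable monomial ideal such that $x_n$ is a weak Lefschetz element on $S/I$. Let $d = \min\{\deg u : u \in G(I),\ m(u) = n\}$. Then every minimal generator $u \in G(I)$ with $\deg u > d$ satisfies $m(u) = n$. -/

import Mathlib

open MvPolynomial

variable {K : Type*} [Field K] {n : ℕ}

/-- The total degree of an exponent vector. -/
def mdeg {n : ℕ} (m : Fin n →₀ ℕ) : ℕ := m.sum fun _ e => e

/-- `I` is a monomial ideal: it contains every monomial of each of its elements. -/
def IsMonomialIdeal (I : Ideal (MvPolynomial (Fin n) K)) : Prop :=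
  ∀ f ∈ I, ∀ m ∈ f.support, (monomial m (1 : K)) ∈ I

/-- `I` is stable: for every monomial `u ∈ I` with largest dividing variable `x_k`,
and every `i ≤ k`, the monomial `(x_i / x_k) * u` lies in `I`. -/
def IsStableIdeal (I : Ideal (MvPolynomial (Fin n) K)) : Prop :=
  ∀ m : Fin n →₀ ℕ, (monomial m (1 : K)) ∈ I →
    ∀ k i : Fin n, m k ≠ 0 → (∀ k', k < k' → m k' = 0) → i ≤ k →
      (monomial (m + Finsupp.single i 1 - Finsupp.single k 1) (1 : K)) ∈ I

/-- `I` is strongly stable: for every monomial `u ∈ I`, every variable `x_k` dividing `u`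
and every `i ≤ k`, the monomial `(x_i / x_k) * u` lies in `I`. -/
def IsStronglyStableIdeal (I : Ideal (MvPolynomial (Fin n) K)) : Prop :=
  ∀ m : Fin n →₀ ℕ, (monomial m (1 : K)) ∈ I →
    ∀ k i : Fin n, m k ≠ 0 → i ≤ k →
      (monomial (m + Finsupp.single i 1 - Finsupp.single k 1) (1 : K)) ∈ I

/-- `v <_lex u` for exponent vectors, lex order with `x_1 > x_2 > ⋯ > x_n`. -/
def lexLt {n : ℕ} (v u : Fin n →₀ ℕ) : Prop :=
  ∃ i : Fin n, (∀ j < i, v j = u j) ∧ v i < u i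

/-- `I` is a lexsegment ideal. -/
def IsLexsegmentIdeal (I : Ideal (MvPolynomial (Fin n) K)) : Prop :=
  IsMonomialIdeal I ∧
    ∀ u v : Fin n →₀ ℕ, (monomial u (1 : K)) ∈ I → mdeg v = mdeg u → lexLt u v →
      (monomial v (1 : K)) ∈ I

/-- The degree `j` piece of `S/I`, as the image of the degree `j` homogeneous polynomials. -/
noncomputable def Qpiece (I : Ideal (MvPolynomial (Fin n) K)) (j : ℕ) :
    Submodule K (MvPolynomial (Fin n) K ⧸ I) :=
  (homogeneousSubmodule (Fin n) K j).map (Ideal.Quotient.mkₐ K I).toLinearMap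

/-- Multiplication by `g` maps `(S/I)_j` injectively (to `(S/I)_{j'}`). -/
def QInj (I : Ideal (MvPolynomial (Fin n) K)) (g : MvPolynomial (Fin n) K)
    (j _j' : ℕ) : Prop :=
  ∀ f₁ ∈ Qpiece I j, ∀ f₂ ∈ Qpiece I j,
    Ideal.Quotient.mk I g * f₁ = Ideal.Quotient.mk I g * f₂ → f₁ = f₂

/-- Multiplication by `g` maps `(S/I)_j` onto `(S/I)_{j'}`. -/
def QSurj (I : Ideal (MvPolynomial (Fin n) K)) (g : MvPolynomial (Fin n) K)
    (j j' : ℕ) : Prop :=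
  ∀ h ∈ Qpiece I j', ∃ f ∈ Qpiece I j, Ideal.Quotient.mk I g * f = h

/-- Multiplication by `g` from `(S/I)_j` to `(S/I)_{j'}` has maximal rank. -/
def MulMaxRank (I : Ideal (MvPolynomial (Fin n) K)) (g : MvPolynomial (Fin n) K)
    (j j' : ℕ) : Prop :=
  QInj I g j j' ∨ QSurj I g j j'

/-- The monomial with exponent vector `m` is a minimal generator of the monomial
ideal `I`. -/
def IsMinGen (I : Ideal (MvPolynomial (Fin n) K)) (m : Fin n →₀ ℕ) : Prop :=
  monomial m (1 : K) ∈ I ∧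
    ∀ i : Fin n, m i ≠ 0 → monomial (m - Finsupp.single i 1) (1 : K) ∉ I

/-
A minimal generator `u` divisible by `x_n` of degree `d` gives the nonzero class `u / x_n` in
`(S/I)_{d-1}` killed by `x_n`, so by the weak Lefschetz property multiplication by `x_n` maps
`(S/I)_{d-1}` onto `(S/I)_d`. For a monomial ideal this forces every monomial of degree `d` not
divisible by `x_n` into `I`, and then no minimal generator of degree `> d` can avoid `x_n`.
-/

lemma mdeg_eq_degree (m : Fin n →₀ ℕ) : mdeg m = m.degree := rfl

lemma mdeg_sub_single_one_add_one {m : Fin n →₀ ℕ} {i : Fin n} (hi : m i ≠ 0) :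
    mdeg (m - Finsupp.single i 1) + 1 = mdeg m := by
  have hle : Finsupp.single i 1 ≤ m := Finsupp.single_le_iff.mpr (Nat.one_le_iff_ne_zero.mpr hi)
  conv_rhs => rw [← tsub_add_cancel_of_le hle]
  rw [mdeg_eq_degree, mdeg_eq_degree, map_add, Finsupp.degree_single]

lemma X_mul_monomial_sub_single_one {σ R : Type*} [CommSemiring R] {m : σ →₀ ℕ} {i : σ}
    (hi : m i ≠ 0) :
    (X i : MvPolynomial σ R) * monomial (m - Finsupp.single i 1) 1 = monomial m 1 := by
  have hle : Finsupp.single i 1 ≤ m := Finsupp.single_le_iff.mpr (Nat.one_le_iff_ne_zero.mpr hi)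
  rw [← pow_one (X i), ← monomial_single_add, add_tsub_cancel_of_le hle]

lemma monomial_mem_of_le {σ R : Type*} [CommSemiring R] {I : Ideal (MvPolynomial σ R)}
    {ν μ : σ →₀ ℕ} (hle : ν ≤ μ) (hν : monomial ν (1 : R) ∈ I) : monomial μ (1 : R) ∈ I :=
  I.mem_of_dvd (monomial_dvd_monomial.mpr ⟨Or.inr hle, one_dvd _⟩) hν

lemma mk_monomial_mem_Qpiece (I : Ideal (MvPolynomial (Fin n) K)) (μ : Fin n →₀ ℕ) :
    Ideal.Quotient.mk I (monomial μ 1) ∈ Qpiece I (mdeg μ) :=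
  ⟨monomial μ 1, (mem_homogeneousSubmodule _ _).mpr (isHomogeneous_monomial _ rfl), rfl⟩

lemma IsMinGen.not_QInj_X {I : Ideal (MvPolynomial (Fin n) K)} {m : Fin n →₀ ℕ}
    (hm : IsMinGen I m) {i : Fin n} (hi : m i ≠ 0) (j' : ℕ) :
    ¬ QInj I (X i) (mdeg m - 1) j' := by
  intro hinj
  have hdeg : mdeg (m - Finsupp.single i 1) = mdeg m - 1 := by
    have := mdeg_sub_single_one_add_one hi; omega
  have hkill : Ideal.Quotient.mk I (X i) *
      Ideal.Quotient.mk I (monomial (m - Finsupp.single i 1) 1) = Ideal.Quotient.mk I (X i) * 0 := by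
    rw [mul_zero, ← map_mul, X_mul_monomial_sub_single_one hi, Ideal.Quotient.eq_zero_iff_mem]
    exact hm.1
  have hzero := hinj _ (hdeg ▸ mk_monomial_mem_Qpiece I _) _ (Submodule.zero_mem _) hkill
  exact hm.2 i hi (Ideal.Quotient.eq_zero_iff_mem.mp hzero)

/-- The monomial `μ` is read off as a coefficient of `x_i p - μ ∈ I`, where it cannot cancel. -/
lemma IsMonomialIdeal.monomial_mem_of_QSurj_X {I : Ideal (MvPolynomial (Fin n) K)}
    (hI : IsMonomialIdeal I) {i : Fin n} {j : ℕ} {μ : Fin n →₀ ℕ}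
    (hsurj : QSurj I (X i) j (mdeg μ)) (hμ : μ i = 0) : monomial μ (1 : K) ∈ I := by
  obtain ⟨_, ⟨p, -, rfl⟩, hp⟩ := hsurj _ (mk_monomial_mem_Qpiece I μ)
  have hdiff : X i * p - monomial μ 1 ∈ I := Ideal.Quotient.eq.mp hp
  refine hI _ hdiff μ ?_
  classical
  simp [coeff_X_mul', hμ]

lemma IsMinGen.mdeg_le_of_forall_monomial_mem {I : Ideal (MvPolynomial (Fin n) K)}
    {m : Fin n →₀ ℕ} (hm : IsMinGen I m) {i : Fin n} (hmi : m i = 0) {d : ℕ}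
    (hI : ∀ ν : Fin n →₀ ℕ, ν i = 0 → mdeg ν = d → monomial ν (1 : K) ∈ I) :
    mdeg m ≤ d := by
  by_contra! hlt
  obtain ⟨k, hk⟩ : ∃ k, m k ≠ 0 := by
    by_contra! h
    simp [show m = 0 from Finsupp.ext h, mdeg] at hlt
  have hd : d ≤ (m - Finsupp.single k 1).degree := by
    have := mdeg_sub_single_one_add_one hk; rw [← mdeg_eq_degree]; omega
  obtain ⟨ν, hν, hνd⟩ := Finsupp.exists_le_degree_eq _ d hd
  have hνi : ν i = 0 := Nat.eq_zero_of_le_zero <| (hν i).trans (by simp [hmi])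
  exact hm.2 k hk (monomial_mem_of_le hν (hI ν hνi hνd))

/-- Let `I` be an `𝔪`-primary stable monomial ideal such that `x_n` is a weak Lefschetz
element on `S/I`, and let `d` be the least degree of a minimal generator divisible by
`x_n`. Then every minimal generator of degree `> d` is divisible by `x_n`. -/
theorem stmt_14 (hn : 1 ≤ n) (I : Ideal (MvPolynomial (Fin n) K))
    (hmon : IsMonomialIdeal I)
    (hwl : ∀ j : ℕ, MulMaxRank I (X (⟨n - 1, by omega⟩ : Fin n)) j (j + 1))
    (d : ℕ)
    (hd : IsLeast {j : ℕ | ∃ m : Fin n →₀ ℕ,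
        IsMinGen I m ∧ mdeg m = j ∧ m ⟨n - 1, by omega⟩ ≠ 0} d) :
    ∀ m : Fin n →₀ ℕ, IsMinGen I m → d < mdeg m → m ⟨n - 1, by omega⟩ ≠ 0 := by
  obtain ⟨m₀, hm₀, rfl, hm₀n⟩ := hd.1
  have hpred : mdeg m₀ - 1 + 1 = mdeg m₀ := by
    have := mdeg_sub_single_one_add_one hm₀n; omega
  have hsurj : QSurj I (X ⟨n - 1, by omega⟩) (mdeg m₀ - 1) (mdeg m₀) := by
    have hwl₀ := hwl (mdeg m₀ - 1)
    rw [hpred] at hwl₀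
    exact hwl₀.resolve_left (hm₀.not_QInj_X hm₀n _)
  intro m hm hlt hmn
  have hle := hm.mdeg_le_of_forall_monomial_mem hmn fun ν hνn hνd =>
    hmon.monomial_mem_of_QSurj_X (by rwa [hνd]) hνn
  omega
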